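/- arXiv:0902.1518 — 2 statements merged into one kernel-verified Lean document; each statement's English description precedes it below -/
import Mathlib

section
/- For every 1 ≤ s ≤ q_1, the n×r matrix with (i,j)-entry ∂^s d_{n-1-i}/(∂b_0^{s-1}∂b_{r-1-j}) equals −s times the product of the n×n matrix with (i,j)-entry ∂^s d_{n-1-i}/(∂b_0^{s-1}∂a_{n-1-j}) with the matrix D (indices 0-based). -/
/-!
Since `B · (1 + d_{n-1} t + ⋯ + d_0 t^n) ≡ A (mod t^{n+1})`, the `d_{n-1-i}` are the
coefficients of `t^{i+1}` in the power series `E = A B⁻¹`, so every derivative of a `d` is a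
coefficient of the corresponding coefficientwise derivative of `E`. There `∂/∂a_w` only sees `A`
and `∂/∂b_w` only sees `B⁻¹`, with `∂B/∂b_w = t^{r-w}`; in particular `∂/∂b_0` multiplies
`B^{-(u+1)}` by `-(u+1) t^r B⁻¹`. Hence both derivative matrices are, up to a sign, a factorial and
a shift of indices, lower triangular Toeplitz matrices: of `t^{rm} A B^{-(m+2)}` and of
`t^{rm} B^{-(m+1)}`, while `D` is that of `E` itself. Products of such matrices are the matrices
of products of the series, and the identity reduces to `B^{-(m+1)} · A B⁻¹ = A B^{-(m+2)}` and
`(m+1)! = (m+1) · m!`.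
-/

open MvPolynomial Matrix

noncomputable section

namespace TB

/-- The polynomial ring `ℂ[a_0,…,a_{n-1},b_0,…,b_{r-1}]`: variable `Sum.inl i` is `a_i`
and `Sum.inr j` is `b_j`. -/
abbrev R (n r : ℕ) : Type := MvPolynomial (Fin n ⊕ Fin r) ℂ

/-- The power series `1 + (cf 1)·t + ⋯ + (cf m)·t^m`. -/
def ser {A : Type*} [CommRing A] (m : ℕ) (cf : ℕ → A) : PowerSeries A :=
  PowerSeries.mk fun k => if k = 0 then 1 else if k ≤ m then cf k else 0

/-- `1 + a_{n-1} t + ⋯ + a_0 t^n`. -/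
def Aser (n r : ℕ) : PowerSeries (R n r) :=
  ser n fun k => if h : 1 ≤ k ∧ k ≤ n then X (Sum.inl ⟨n - k, by omega⟩) else 0

/-- `1 + b_{r-1} t + ⋯ + b_0 t^r`. -/
def Bser (n r : ℕ) : PowerSeries (R n r) :=
  ser r fun k => if h : 1 ≤ k ∧ k ≤ r then X (Sum.inr ⟨r - k, by omega⟩) else 0

/-- `1 + d_{n-1} t + ⋯ + d_0 t^n`. -/
def Dser (n r : ℕ) (d : Fin n → R n r) : PowerSeries (R n r) :=
  ser n fun k => if h : 1 ≤ k ∧ k ≤ n then d ⟨n - k, by omega⟩ else 0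

/-- `1 + d_{n-1} t + ⋯ + d_1 t^{n-1}`. -/
def Dhatser (n r : ℕ) (d : Fin n → R n r) : PowerSeries (R n r) :=
  ser (n - 1) fun k => if h : 1 ≤ k ∧ k ≤ n - 1 then d ⟨n - k, by omega⟩ else 0

/-- `f(x) = x^n + a_{n-1}x^{n-1} + ⋯ + a_0`. -/
def fpoly (n r : ℕ) : Polynomial (R n r) :=
  Polynomial.X ^ n + ∑ i : Fin n, Polynomial.C (X (Sum.inl i)) * Polynomial.X ^ (i : ℕ)

/-- `g(x) = x^r + b_{r-1}x^{r-1} + ⋯ + b_0`. -/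
def gpoly (n r : ℕ) : Polynomial (R n r) :=
  Polynomial.X ^ r + ∑ j : Fin r, Polynomial.C (X (Sum.inr j)) * Polynomial.X ^ (j : ℕ)

/-- The coefficient `c_k` of `f·g`, for `0 ≤ k ≤ n+r-1`. -/
def cc (n r : ℕ) (k : Fin (n + r)) : R n r := (fpoly n r * gpoly n r).coeff (k : ℕ)

/-- `d_0, …, d_{n-1}` are the unique polynomials with
`(1 + b_{r-1}t + ⋯ + b_0 t^r)(1 + d_{n-1}t + ⋯ + d_0 t^n) ≡ 1 + a_{n-1}t + ⋯ + a_0 t^n (mod t^{n+1})`. -/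
def dSpec (n r : ℕ) (d : Fin n → R n r) : Prop :=
  ∀ k ≤ n, PowerSeries.coeff k (Bser n r * Dser n r d)
    = PowerSeries.coeff k (Aser n r)

/-- `ψ_i = d_i` for `0 ≤ i ≤ r-1`, and
`ψ_{s·r+i} = ∂^s d_{r-1} / (∂b_0^{s-1} ∂b_{r-1-i})` for `s ≥ 1`, `0 ≤ i ≤ r-1`. -/
def psi (n r : ℕ) (hr : 0 < r) (hrn : r ≤ n) (d : Fin n → R n r) (m : ℕ) : R n r :=
  if h : m < r then d ⟨m, by omega⟩
  else
    (fun q => pderiv (Sum.inr (⟨0, hr⟩ : Fin r)) q)^[m / r - 1]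
      (pderiv (Sum.inr (⟨r - 1 - m % r, by omega⟩ : Fin r)) (d ⟨r - 1, by omega⟩))

/-- The `m×m` lower shift matrix over `R n r`. -/
def Lmat (n r m : ℕ) : Matrix (Fin m) (Fin m) (R n r) :=
  Matrix.of fun i j => if (i : ℕ) = (j : ℕ) + 1 then 1 else 0

/-- `B = I_n + b_{r-1}L_n + ⋯ + b_0 L_n^r`. -/
def Bmat (n r : ℕ) (hr : 0 < r) : Matrix (Fin n) (Fin n) (R n r) :=
  1 + ∑ k ∈ Finset.range r, (X (Sum.inr (⟨r - 1 - k, by omega⟩ : Fin r)) : R n r) • Lmat n r n ^ (k + 1)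

/-- `D̂ = I_n + d_{n-1}L_n + ⋯ + d_1 L_n^{n-1}`. -/
def Dhat (n r : ℕ) (hn : 0 < n) (d : Fin n → R n r) : Matrix (Fin n) (Fin n) (R n r) :=
  1 + ∑ k ∈ Finset.range (n - 1), d ⟨n - 1 - k, by omega⟩ • Lmat n r n ^ (k + 1)

/-- `D`: the first `r` columns of `D̂`. -/
def Dmat (n r : ℕ) (hn : 0 < n) (hrn : r ≤ n) (d : Fin n → R n r) :
    Matrix (Fin n) (Fin r) (R n r) :=
  (Dhat n r hn d).submatrix id (Fin.castLE hrn)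

/-- `Â = I_n + a_{n-1}L_n + ⋯ + a_1 L_n^{n-1}`. -/
def Ahat (n r : ℕ) (hn : 0 < n) : Matrix (Fin n) (Fin n) (R n r) :=
  1 + ∑ k ∈ Finset.range (n - 1),
    (X (Sum.inl (⟨n - 1 - k, by omega⟩ : Fin n)) : R n r) • Lmat n r n ^ (k + 1)

/-- `A`: the first `r` columns of `Â`. -/
def Amat (n r : ℕ) (hn : 0 < n) (hrn : r ≤ n) : Matrix (Fin n) (Fin r) (R n r) :=
  (Ahat n r hn).submatrix id (Fin.castLE hrn)

/-- The Jacobian matrix of a family `p` of elements of `R n r`: the row of index `i` is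
`(∂p_i/∂a_{n-1}, …, ∂p_i/∂a_0, ∂p_i/∂b_{r-1}, …, ∂p_i/∂b_0)`. -/
def jac {n r : ℕ} {ι : Type*} (p : ι → R n r) : Matrix ι (Fin (n + r)) (R n r) :=
  Matrix.of fun i j =>
    if h : (j : ℕ) < n then pderiv (Sum.inl (⟨n - 1 - (j : ℕ), by omega⟩ : Fin n)) (p i)
    else
      pderiv (Sum.inr (⟨r - 1 - ((j : ℕ) - n), by have := j.isLt; omega⟩ : Fin r)) (p i)

/-- The set of all `k×k` minors of a matrix. -/
def minorsSet {n r : ℕ} {ι : Type*} (k : ℕ) (M : Matrix ι (Fin (n + r)) (R n r)) :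
    Set (R n r) :=
  { x | ∃ (ri : Fin k → ι) (ci : Fin k → Fin (n + r)), x = (M.submatrix ri ci).det }

/-- Evaluation at the origin `a_i = b_j = 0`. -/
def ev0 (n r : ℕ) : R n r →+* ℂ := eval fun _ => 0

/-- The maximal ideal `(a_0,…,a_{n-1},b_0,…,b_{r-1})`. -/
def mIdeal (n r : ℕ) : Ideal (R n r) :=
  Ideal.span (Set.range (X : (Fin n ⊕ Fin r) → R n r))

/-- `1 + g_1 t + ⋯ + g_{r_1} t^{r_1}` over `S = ℂ[g_1,…,g_{r_1},b_0,…,b_{r-1}] = R r1 r`,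
where `g_k` is the variable `Sum.inl ⟨k-1⟩`. -/
def Gser (r1 r : ℕ) : PowerSeries (R r1 r) :=
  ser r1 fun k => if h : 1 ≤ k ∧ k ≤ r1 then X (Sum.inl ⟨k - 1, by omega⟩) else 0

/-- `1 + w_{r-1} t + ⋯ + w_0 t^r`. -/
def Wser (r1 r : ℕ) (w : Fin r → R r1 r) : PowerSeries (R r1 r) :=
  ser r fun k => if h : 1 ≤ k ∧ k ≤ r then w ⟨r - k, by omega⟩ else 0

/-- `1 + w_{r-1} t + ⋯ + w_1 t^{r-1}`. -/
def Whatser (r1 r : ℕ) (w : Fin r → R r1 r) : PowerSeries (R r1 r) :=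
  ser (r - 1) fun k => if h : 1 ≤ k ∧ k ≤ r - 1 then w ⟨r - k, by omega⟩ else 0

/-- `w_0,…,w_{r-1}` are the unique polynomials with
`(1 + g_1 t + ⋯ + g_{r_1}t^{r_1})(1 + w_{r-1}t + ⋯ + w_0 t^r) ≡ 1 + b_{r-1}t + ⋯ + b_0 t^r
(mod t^{r+1})`. -/
def wSpec (r1 r : ℕ) (w : Fin r → R r1 r) : Prop :=
  ∀ k ≤ r, PowerSeries.coeff k (Gser r1 r * Wser r1 r w)
    = PowerSeries.coeff k (Bser r1 r)

/-- `φ'_i = w_i` for `0 ≤ i ≤ r_1-1`, and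
`φ'_{s·r_1+i} = ∂^s w_{r_1-1} / (∂g_{r_1}^{s-1} ∂g_{1+i})` for `s ≥ 1`, `0 ≤ i ≤ r_1-1`. -/
def phi' (r1 r : ℕ) (h1 : 0 < r1) (h2 : r1 < r) (w : Fin r → R r1 r) (m : ℕ) : R r1 r :=
  if h : m < r1 then w ⟨m, by omega⟩
  else
    (fun q => pderiv (Sum.inl (⟨r1 - 1, by omega⟩ : Fin r1)) q)^[m / r1 - 1]
      (pderiv (Sum.inl (⟨m % r1, Nat.mod_lt m h1⟩ : Fin r1)) (w ⟨r1 - 1, by omega⟩))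

/-- The substitution `g_k ↦ γ_{n-k}`, `b_j ↦ b_j`, from `S = R r1 r` to `R n r`. -/
def subst (n r r1 : ℕ) (γ : ℕ → R n r) : R r1 r →ₐ[ℂ] R n r :=
  aeval (Sum.elim (fun i : Fin r1 => γ (n - ((i : ℕ) + 1))) fun j : Fin r => X (Sum.inr j))


/-- From `n = q_1·r + r_1` with `q_1 ≥ 1` we get `r ≤ n`. -/
theorem rle (q1 r r1 n : ℕ) (hq1 : 1 ≤ q1) (hn : n = q1 * r + r1) : r ≤ n := by
  have := Nat.le_mul_of_pos_left r hq1
  omega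


end TB

namespace Derivation

variable {R A : Type*} [CommRing R] [CommRing A] [Algebra R A] (D : Derivation R A A)

def mapPowerSeries : Derivation R (PowerSeries A) (PowerSeries A) where
  toFun f := PowerSeries.mk fun k => D (PowerSeries.coeff k f)
  map_add' f g := by ext; simp
  map_smul' c f := by ext; simp
  map_one_eq_zero' := by ext k; simp [PowerSeries.coeff_one, apply_ite D]
  leibniz' f g := by
    rw [smul_eq_mul, smul_eq_mul, mul_comm g]
    ext k
    simp only [LinearMap.coe_mk, AddHom.coe_mk, PowerSeries.coeff_mk, map_add,
      PowerSeries.coeff_mul, map_sum, ← Finset.sum_add_distrib]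
    refine Finset.sum_congr rfl fun x _ => ?_
    rw [D.leibniz, smul_eq_mul, smul_eq_mul]
    ring

@[simp]
theorem coeff_mapPowerSeries (f : PowerSeries A) (k : ℕ) :
    PowerSeries.coeff k (D.mapPowerSeries f) = D (PowerSeries.coeff k f) :=
  PowerSeries.coeff_mk k fun k => D (PowerSeries.coeff k f)

theorem coeff_iterate_mapPowerSeries (m k : ℕ) (f : PowerSeries A) :
    PowerSeries.coeff k ((⇑D.mapPowerSeries)^[m] f) = (⇑D)^[m] (PowerSeries.coeff k f) := by
  induction m generalizing f with
  | zero => rfl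
  | succ m ih =>
    rw [Function.iterate_succ_apply, Function.iterate_succ_apply, ih, coeff_mapPowerSeries]

theorem mapPowerSeries_X : D.mapPowerSeries PowerSeries.X = 0 := by
  ext k : 1
  simp [PowerSeries.coeff_X, apply_ite D]

theorem mapPowerSeries_X_pow (c : ℕ) : D.mapPowerSeries (PowerSeries.X ^ c) = 0 := by
  rw [leibniz_pow, mapPowerSeries_X, smul_zero, smul_zero]

theorem iterate_mul_pow_of_mul_eq_one {b b' F : A} (hb : b' * b = 1) (hDb : D (D b) = 0)
    (hF : D F = 0) (u m : ℕ) :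
    (⇑D)^[m] (F * b' ^ (u + 1)) =
      (-1) ^ m * ((u + 1).ascFactorial m : A) * D b ^ m * F * b' ^ (u + 1 + m) := by
  induction m with
  | zero => simp
  | succ m ih =>
    have hG : D ((-1) ^ m * ((u + 1).ascFactorial m : A) * D b ^ m * F) = 0 := by
      simp [D.leibniz, D.leibniz_pow, hDb, hF]
    rw [Function.iterate_succ_apply', ih, D.leibniz, hG, D.leibniz_pow,
      D.leibniz_of_mul_eq_one hb, Nat.ascFactorial_succ, show u + 1 + m - 1 = u + m by omega]
    simp only [smul_eq_mul, nsmul_eq_mul, mul_zero, add_zero]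
    push_cast
    ring

end Derivation

namespace PowerSeries

variable {A : Type*} [Semiring A]

def lowerToeplitz {p q : ℕ} (f : PowerSeries A) : Matrix (Fin p) (Fin q) A :=
  Matrix.of fun i j => if (j : ℕ) ≤ i then coeff ((i : ℕ) - j) f else 0

theorem lowerToeplitz_apply {p q : ℕ} (f : PowerSeries A) (i : Fin p) (j : Fin q) :
    lowerToeplitz f i j = if (j : ℕ) ≤ i then coeff ((i : ℕ) - j) f else 0 :=
  rfl

theorem lowerToeplitz_smul {S : Type*} [Semiring S] [Module S A] {p q : ℕ} (c : S)
    (f : PowerSeries A) :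
    (lowerToeplitz (c • f) : Matrix (Fin p) (Fin q) A) = c • lowerToeplitz f := by
  ext i j
  simp [lowerToeplitz_apply]

theorem lowerToeplitz_congr {p q : ℕ} {f g : PowerSeries A}
    (h : ∀ k < p, coeff k f = coeff k g) :
    (lowerToeplitz f : Matrix (Fin p) (Fin q) A) = lowerToeplitz g := by
  ext i j
  simp only [lowerToeplitz_apply]
  split_ifs
  · exact h _ (by omega)
  · rfl

theorem lowerToeplitz_X_pow_succ_mul {p q : ℕ} (f : PowerSeries A) :
    (Matrix.of fun (i : Fin p) (j : Fin q) => coeff ((i : ℕ) + 1) (X ^ ((j : ℕ) + 1) * f)) =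
      lowerToeplitz f := by
  ext i j
  simp only [Matrix.of_apply, lowerToeplitz_apply, coeff_X_pow_mul', Nat.add_le_add_iff_right,
    Nat.add_sub_add_right]

theorem lowerToeplitz_mul {n q : ℕ} (f g : PowerSeries A) :
    (lowerToeplitz f : Matrix (Fin n) (Fin n) A) * (lowerToeplitz g : Matrix (Fin n) (Fin q) A) =
      (lowerToeplitz (f * g) : Matrix (Fin n) (Fin q) A) := by
  ext i j
  simp only [Matrix.mul_apply, lowerToeplitz_apply, ite_zero_mul_ite_zero, ← Finset.sum_filter]
  split_ifs with hji
  · rw [coeff_mul]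
    refine Finset.sum_bij' (fun k _ => ((i : ℕ) - k, (k : ℕ) - j))
      (fun p hp => ⟨j + p.2, by have := Finset.HasAntidiagonal.mem_antidiagonal.mp hp; omega⟩)
      ?_ ?_ ?_ ?_ fun _ _ => rfl <;>
    · intro x hx
      have hx' := hx
      simp only [Finset.mem_filter, Finset.mem_univ, true_and,
        Finset.HasAntidiagonal.mem_antidiagonal, Fin.ext_iff, Prod.ext_iff] at hx' ⊢
      omega
  · refine Finset.sum_eq_zero fun k hk => absurd hk ?_
    simp only [Finset.mem_filter, Finset.mem_univ, true_and]
    omega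

end PowerSeries

namespace TB

theorem mapPowerSeries_pderiv_inl_Aser (n r : ℕ) (w : Fin n) :
    (pderiv (Sum.inl w)).mapPowerSeries (Aser n r) = PowerSeries.X ^ (n - (w : ℕ)) := by
  have := w.isLt
  ext k : 1
  simp only [Derivation.coeff_mapPowerSeries, Aser, ser, PowerSeries.coeff_mk,
    PowerSeries.coeff_X_pow]
  split_ifs <;> simp [pderiv_X, Pi.single_apply, Fin.ext_iff] <;> omega

theorem mapPowerSeries_pderiv_inr_Aser (n r : ℕ) (w : Fin r) :
    (pderiv (Sum.inr w)).mapPowerSeries (Aser n r) = 0 := by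
  ext k : 1
  simp only [Derivation.coeff_mapPowerSeries, Aser, ser, PowerSeries.coeff_mk]
  split_ifs <;> simp [pderiv_X]

theorem mapPowerSeries_pderiv_inl_Bser (n r : ℕ) (w : Fin n) :
    (pderiv (Sum.inl w)).mapPowerSeries (Bser n r) = 0 := by
  ext k : 1
  simp only [Derivation.coeff_mapPowerSeries, Bser, ser, PowerSeries.coeff_mk]
  split_ifs <;> simp [pderiv_X]

theorem mapPowerSeries_pderiv_inr_Bser (n r : ℕ) (w : Fin r) :
    (pderiv (Sum.inr w)).mapPowerSeries (Bser n r) = PowerSeries.X ^ (r - (w : ℕ)) := by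
  have := w.isLt
  ext k : 1
  simp only [Derivation.coeff_mapPowerSeries, Bser, ser, PowerSeries.coeff_mk,
    PowerSeries.coeff_X_pow]
  split_ifs <;> simp [pderiv_X, Pi.single_apply, Fin.ext_iff] <;> omega

def BserInv (n r : ℕ) : PowerSeries (R n r) := (Bser n r).invOfUnit 1

theorem BserInv_mul_Bser (n r : ℕ) : BserInv n r * Bser n r = 1 := by
  rw [mul_comm]
  exact PowerSeries.mul_invOfUnit _ _ (by simp [Bser, ser])

theorem trunc_Dser_eq {n r : ℕ} {d : Fin n → R n r} (hd : dSpec n r d) :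
    PowerSeries.trunc (n + 1) (Dser n r d) =
      PowerSeries.trunc (n + 1) (Aser n r * BserInv n r) := by
  have hBD : PowerSeries.trunc (n + 1) (Bser n r * Dser n r d) =
      PowerSeries.trunc (n + 1) (Aser n r) := by
    ext k : 1
    simp only [PowerSeries.coeff_trunc]
    split_ifs with hk
    · exact hd k (by omega)
    · rfl
  calc PowerSeries.trunc (n + 1) (Dser n r d)
      = PowerSeries.trunc (n + 1) (BserInv n r * (Bser n r * Dser n r d)) := by
        rw [← mul_assoc, BserInv_mul_Bser, one_mul]
    _ = PowerSeries.trunc (n + 1) (Aser n r * BserInv n r) := by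
        rw [← PowerSeries.trunc_mul_trunc, hBD, PowerSeries.trunc_mul_trunc, mul_comm]

theorem coeff_Dser_eq {n r : ℕ} {d : Fin n → R n r} (hd : dSpec n r d) {k : ℕ}
    (hk : k ≤ n) :
    PowerSeries.coeff k (Dser n r d) = PowerSeries.coeff k (Aser n r * BserInv n r) := by
  rw [← PowerSeries.coeff_coe_trunc_of_lt (Nat.lt_succ_of_le hk), trunc_Dser_eq hd,
    PowerSeries.coeff_coe_trunc_of_lt (Nat.lt_succ_of_le hk)]

theorem d_eq_coeff_Aser_mul_BserInv {n r : ℕ} {d : Fin n → R n r} (hd : dSpec n r d)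
    (i : Fin n) :
    d ⟨n - 1 - i, by omega⟩ = PowerSeries.coeff (i + 1) (Aser n r * BserInv n r) := by
  rw [← coeff_Dser_eq hd (by omega)]
  simp only [Dser, ser, PowerSeries.coeff_mk]
  rw [if_neg (by omega), if_pos (by omega), dif_pos (by omega)]
  congr 2
  omega

theorem Lmat_pow_apply (n r m p : ℕ) (a b : Fin m) :
    (Lmat n r m ^ p) a b = if (a : ℕ) = b + p then 1 else 0 := by
  induction p generalizing b with
  | zero => simp [Matrix.one_apply, Fin.ext_iff]
  | succ p ih =>
    rw [pow_succ, Matrix.mul_apply]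
    by_cases hb : (b : ℕ) + 1 < m
    · rw [Fintype.sum_eq_single ⟨b + 1, hb⟩ fun c hc => by
        rw [Lmat, Matrix.of_apply, if_neg fun h => hc (Fin.ext h), mul_zero]]
      rw [ih, Lmat, Matrix.of_apply, if_pos rfl, mul_one,
        show (b : ℕ) + 1 + p = b + (p + 1) by omega]
    · rw [if_neg (by omega)]
      refine Finset.sum_eq_zero fun c _ => ?_
      rw [Lmat, Matrix.of_apply, if_neg (by omega), mul_zero]

theorem one_add_sum_smul_Lmat_pow (n r m : ℕ) (f : PowerSeries (R n r))
    (hf : PowerSeries.constantCoeff f = 1) :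
    1 + ∑ k ∈ Finset.range (m - 1), PowerSeries.coeff (k + 1) f • Lmat n r m ^ (k + 1) =
      PowerSeries.lowerToeplitz f := by
  ext a b : 1
  simp only [Matrix.add_apply, Matrix.sum_apply, Matrix.smul_apply, Lmat_pow_apply, smul_eq_mul,
    mul_ite, mul_one, mul_zero, PowerSeries.lowerToeplitz_apply]
  rcases lt_trichotomy (b : ℕ) a with hba | hba | hab
  · rw [Matrix.one_apply_ne (Fin.ne_of_val_ne (by omega)),
      Finset.sum_eq_single ((a : ℕ) - b - 1)]
    · rw [if_pos (by omega), if_pos (by omega), zero_add, Nat.sub_add_cancel (by omega)]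
    · intro k _ hk
      exact if_neg (by omega)
    · intro hk
      exact absurd (Finset.mem_range.mpr (by omega)) hk
  · obtain rfl : a = b := Fin.ext hba.symm
    rw [Matrix.one_apply_eq, Finset.sum_eq_zero fun k _ => if_neg (by omega), if_pos le_rfl,
      Nat.sub_self, PowerSeries.coeff_zero_eq_constantCoeff_apply, hf, add_zero]
  · rw [Matrix.one_apply_ne (Fin.ne_of_val_ne (by omega)),
      Finset.sum_eq_zero fun k _ => if_neg (by omega), if_neg (by omega), add_zero]

theorem Dhat_eq_lowerToeplitz (n r : ℕ) (hn : 0 < n) (d : Fin n → R n r) :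
    Dhat n r hn d = PowerSeries.lowerToeplitz (Dser n r d) := by
  rw [Dhat, ← one_add_sum_smul_Lmat_pow n r n (Dser n r d) (by simp [Dser, ser])]
  congr 1
  refine Finset.sum_congr rfl fun k hk => ?_
  have hk := Finset.mem_range.mp hk
  simp only [Dser, ser, PowerSeries.coeff_mk]
  rw [if_neg (by omega), if_pos (by omega), dif_pos (by omega)]
  congr 3
  omega

theorem Dmat_eq_lowerToeplitz {n r : ℕ} (hn : 0 < n) (hrn : r ≤ n) {d : Fin n → R n r}
    (hd : dSpec n r d) : Dmat n r hn hrn d = PowerSeries.lowerToeplitz (Aser n r * BserInv n r) :=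
  calc Dmat n r hn hrn d = PowerSeries.lowerToeplitz (Dser n r d) := by
        rw [Dmat, Dhat_eq_lowerToeplitz]
        rfl
    _ = _ := PowerSeries.lowerToeplitz_congr fun _ hk => coeff_Dser_eq hd hk.le

theorem iterate_mapPowerSeries_pderiv_inr_zero {n r : ℕ} (hr : 0 < r) {F : PowerSeries (R n r)}
    (hF : (pderiv (Sum.inr (⟨0, hr⟩ : Fin r))).mapPowerSeries F = 0) (u m : ℕ) :
    (⇑(pderiv (Sum.inr (⟨0, hr⟩ : Fin r))).mapPowerSeries)^[m] (F * BserInv n r ^ (u + 1)) =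
      (-1) ^ m * ((u + 1).ascFactorial m : PowerSeries (R n r)) * PowerSeries.X ^ (r * m) * F *
        BserInv n r ^ (u + 1 + m) := by
  have hB :
      (pderiv (Sum.inr (⟨0, hr⟩ : Fin r))).mapPowerSeries (Bser n r) = PowerSeries.X ^ r :=
    mapPowerSeries_pderiv_inr_Bser n r ⟨0, hr⟩
  rw [Derivation.iterate_mul_pow_of_mul_eq_one _ (BserInv_mul_Bser n r)
    (by rw [hB, Derivation.mapPowerSeries_X_pow]) hF, hB, pow_mul]

/- The right-hand sides are written as coefficients of `X ^ (j + 1) * _` so that, as matrices in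
`i` and `j`, they become `lowerToeplitz _` by `PowerSeries.lowerToeplitz_X_pow_succ_mul`. -/
theorem iterate_pderiv_pderiv_inr_d {n r : ℕ} (hr : 0 < r) {d : Fin n → R n r}
    (hd : dSpec n r d) (m : ℕ) (i : Fin n) (j : Fin r) :
    (fun q => pderiv (Sum.inr (⟨0, hr⟩ : Fin r)) q)^[m]
        (pderiv (Sum.inr (⟨r - 1 - j, by omega⟩ : Fin r)) (d ⟨n - 1 - i, by omega⟩)) =
      PowerSeries.coeff ((i : ℕ) + 1) (PowerSeries.X ^ ((j : ℕ) + 1) *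
        ((-1) ^ (m + 1) * ((m + 1).factorial : PowerSeries (R n r)) *
          (PowerSeries.X ^ (r * m) * Aser n r * BserInv n r ^ (m + 2)))) := by
  have hE : (pderiv (Sum.inr (⟨r - 1 - j, by omega⟩ : Fin r))).mapPowerSeries
      (Aser n r * BserInv n r) =
        -(PowerSeries.X ^ ((j : ℕ) + 1) * Aser n r) * BserInv n r ^ (1 + 1) := by
    rw [Derivation.leibniz, Derivation.leibniz_of_mul_eq_one _ (BserInv_mul_Bser n r),
      mapPowerSeries_pderiv_inr_Aser, mapPowerSeries_pderiv_inr_Bser,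
      show r - (r - 1 - (j : ℕ)) = j + 1 by omega]
    simp only [smul_eq_mul, mul_zero, add_zero]
    ring
  have hF : (pderiv (Sum.inr (⟨0, hr⟩ : Fin r))).mapPowerSeries
      (-(PowerSeries.X ^ ((j : ℕ) + 1) * Aser n r)) = 0 := by
    rw [map_neg, Derivation.leibniz, Derivation.mapPowerSeries_X_pow,
      mapPowerSeries_pderiv_inr_Aser, smul_zero, smul_zero, add_zero, neg_zero]
  have hfac : (1 + 1).ascFactorial m = (m + 1).factorial := by
    rw [add_comm m, ← Nat.factorial_mul_ascFactorial 1 m, Nat.factorial_one, one_mul]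
  rw [d_eq_coeff_Aser_mul_BserInv hd, ← Derivation.coeff_mapPowerSeries,
    ← Derivation.coeff_iterate_mapPowerSeries, hE, iterate_mapPowerSeries_pderiv_inr_zero hr hF, hfac]
  refine congrArg (PowerSeries.coeff _) ?_
  ring

theorem iterate_pderiv_pderiv_inl_d {n r : ℕ} (hr : 0 < r) {d : Fin n → R n r}
    (hd : dSpec n r d) (m : ℕ) (i k : Fin n) :
    (fun q => pderiv (Sum.inr (⟨0, hr⟩ : Fin r)) q)^[m]
        (pderiv (Sum.inl (⟨n - 1 - k, by omega⟩ : Fin n)) (d ⟨n - 1 - i, by omega⟩)) =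
      PowerSeries.coeff ((i : ℕ) + 1) (PowerSeries.X ^ ((k : ℕ) + 1) *
        ((-1) ^ m * (m.factorial : PowerSeries (R n r)) *
          (PowerSeries.X ^ (r * m) * BserInv n r ^ (m + 1)))) := by
  have hE : (pderiv (Sum.inl (⟨n - 1 - k, by omega⟩ : Fin n))).mapPowerSeries
      (Aser n r * BserInv n r) = PowerSeries.X ^ ((k : ℕ) + 1) * BserInv n r ^ (0 + 1) := by
    rw [Derivation.leibniz, Derivation.leibniz_of_mul_eq_one _ (BserInv_mul_Bser n r),
      mapPowerSeries_pderiv_inl_Aser, mapPowerSeries_pderiv_inl_Bser,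
      show n - (n - 1 - (k : ℕ)) = k + 1 by omega]
    simp only [smul_eq_mul, mul_zero, zero_add]
    ring
  have hF : (pderiv (Sum.inr (⟨0, hr⟩ : Fin r))).mapPowerSeries
      (PowerSeries.X ^ ((k : ℕ) + 1) : PowerSeries (R n r)) = 0 := by
    rw [Derivation.mapPowerSeries_X_pow]
  rw [d_eq_coeff_Aser_mul_BserInv hd, ← Derivation.coeff_mapPowerSeries,
    ← Derivation.coeff_iterate_mapPowerSeries, hE, iterate_mapPowerSeries_pderiv_inr_zero hr hF, zero_add, Nat.one_ascFactorial]
  refine congrArg (PowerSeries.coeff _) ?_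
  ring

/-- Lemma 3.2: for `1 ≤ s ≤ q_1`,
`(∂^s d_{n-1-i}/(∂b_0^{s-1}∂b_{r-1-j})) = -s · (∂^s d_{n-1-i}/(∂b_0^{s-1}∂a_{n-1-j})) · D`. -/
theorem stmt3 (n r q1 r1 : ℕ) (hq1 : 1 ≤ q1) (h1 : 0 < r1) (h2 : r1 < r)
    (hn : n = q1 * r + r1)
    (d : Fin n → R n r) (hd : dSpec n r d) :
    ∀ s, 1 ≤ s → s ≤ q1 →
      (Matrix.of fun (i : Fin n) (j : Fin r) =>
          (fun q => pderiv (Sum.inr (⟨0, by omega⟩ : Fin r)) q)^[s - 1]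
            (pderiv (Sum.inr (⟨r - 1 - (j : ℕ), by omega⟩ : Fin r))
              (d ⟨n - 1 - (i : ℕ), by omega⟩)))
        = (-(s : R n r)) •
          ((Matrix.of fun i j : Fin n =>
              (fun q => pderiv (Sum.inr (⟨0, by omega⟩ : Fin r)) q)^[s - 1]
                (pderiv (Sum.inl (⟨n - 1 - (j : ℕ), by omega⟩ : Fin n))
                  (d ⟨n - 1 - (i : ℕ), by omega⟩)))
            * Dmat n r (by omega) (rle q1 r r1 n (by omega) hn) d) := by
  intro s _ _
  obtain ⟨m, rfl⟩ : ∃ m, s = m + 1 := ⟨s - 1, by omega⟩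
  have hr : 0 < r := by omega
  simp only [Nat.add_sub_cancel, iterate_pderiv_pderiv_inr_d hr hd,
    iterate_pderiv_pderiv_inl_d hr hd, PowerSeries.lowerToeplitz_X_pow_succ_mul,
    Dmat_eq_lowerToeplitz _ _ hd, PowerSeries.lowerToeplitz_mul, ← PowerSeries.lowerToeplitz_smul]
  congr 1
  rw [PowerSeries.smul_eq_C_mul, map_neg, map_natCast]
  push_cast [Nat.factorial_succ]
  ring

end TB
end
end

section
/- For every 0 ≤ p ≤ q_1−1, the Jacobian matrix of (c_0,…,c_{n+r-1}, ψ_0,…,ψ_{pr-1}) evaluated at the origin has rank n (corank r in the n+r variables). (This expresses that the first q_1 entries of the Thom–Boardman symbol TB(I(μ_{n,r})) are all equal to r.) -/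
open MvPolynomial Matrix

noncomputable section

/-!
Give `a_i` the weight `n - i` and `b_j` the weight `r - j`. The series `1 + a_{n-1}t + ⋯` and
`1 + b_{r-1}t + ⋯` then have weighted homogeneous coefficients, so solving for `d` degree by
degree shows that `d_i` is weighted homogeneous of degree `n - i`, and hence `ψ_m` of degree
`n - m`. For `m < pr ≤ n - r` every partial derivative of `ψ_m` in a variable of weight `≤ r`
has positive degree and vanishes at the origin, so the gradient of `ψ_m` at the origin is a
combination of the `da_t` with `t < n - r`.

At the origin the gradients of `c_0, …, c_{r-1}` vanish and that of `c_{t+r}` is `da_t`, plus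
`db_{t+r-n}` when `t + r ≥ n`. These `n` gradients are independent and contain every `da_t` with
`t < n - r`, so the whole Jacobian has rank `n`.
-/

namespace MvPolynomial.IsWeightedHomogeneous

variable {σ R : Type*} [CommSemiring R] {w : σ → ℕ} {φ : MvPolynomial σ R}

theorem iterate_pderiv {D k : ℕ} {i : σ} (h : IsWeightedHomogeneous w φ (D + k * w i)) :
    IsWeightedHomogeneous w ((pderiv i)^[k] φ) D := by
  induction k generalizing D with
  | zero => simpa using h
  | succ k ih =>
    rw [Function.iterate_succ_apply']
    exact (ih (D := D + w i) (by rwa [add_right_comm, add_assoc, ← Nat.succ_mul])).pderiv rfl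

theorem constantCoeff_eq_zero {D : ℕ} (h : IsWeightedHomogeneous w φ D) (hD : D ≠ 0) :
    constantCoeff φ = 0 :=
  h.coeff_eq_zero 0 (by simpa using hD.symm)

end MvPolynomial.IsWeightedHomogeneous

open MvPolynomial in
theorem PowerSeries.isWeightedHomogeneous_coeff_of_mul_eq {σ R : Type*} [CommRing R]
    {w : σ → ℕ} {N : ℕ} {A B D : PowerSeries (MvPolynomial σ R)} (hB₀ : constantCoeff B = 1)
    (hB : ∀ k, IsWeightedHomogeneous w (coeff k B) k)
    (hA : ∀ k ≤ N, IsWeightedHomogeneous w (coeff k A) k)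
    (hBD : ∀ k ≤ N, coeff k (B * D) = coeff k A) :
    ∀ k ≤ N, IsWeightedHomogeneous w (coeff k D) k := by
  intro k
  induction k using Nat.strong_induction_on with
  | _ k ih =>
    intro hk
    have h := hBD k hk
    rw [coeff_mul, Finset.Nat.sum_antidiagonal_eq_sum_range_succ (fun i j => coeff i B * coeff j D),
      Finset.sum_range_succ', coeff_zero_eq_constantCoeff_apply, hB₀, one_mul, Nat.sub_zero,
      ← eq_sub_iff_add_eq'] at h
    rw [h, ← mem_weightedHomogeneousSubmodule]
    refine Submodule.sub_mem _ (hA k hk) (Submodule.sum_mem _ fun i hi => ?_)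
    have hi : i < k := Finset.mem_range.mp hi
    have hprod := (hB (i + 1)).mul (ih (k - (i + 1)) (by omega) (by omega))
    rwa [Nat.add_sub_cancel' hi] at hprod

theorem Submodule.pi_mem_of_single_mem {ι K : Type*} [Fintype ι] [DecidableEq ι] [Semiring K]
    {U : Submodule K (ι → K)} {x : ι → K} (h : ∀ i, x i ≠ 0 → Pi.single i 1 ∈ U) : x ∈ U := by
  rw [← Finset.univ_sum_single x]
  refine U.sum_mem fun i _ => ?_
  by_cases hi : x i = 0
  · simp [hi]
  · simpa [← Pi.single_smul'] using U.smul_mem (x i) (h i hi)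

theorem Polynomial.coeff_X_pow_add_sum_C_mul_X_pow {A : Type*} [Semiring A] {m : ℕ}
    (x : Fin m → A) (u : ℕ) :
    (X ^ m + ∑ i : Fin m, C (x i) * X ^ (i : ℕ)).coeff u
      = if h : u < m then x ⟨u, h⟩ else if u = m then 1 else 0 := by
  have hsum : (∑ i : Fin m, if u = i then x i else 0) = if h : u < m then x ⟨u, h⟩ else 0 := by
    split_ifs with h
    · rw [Finset.sum_eq_single ⟨u, h⟩] <;> simp +contextual [Fin.ext_iff, eq_comm]
    · exact Finset.sum_eq_zero fun i _ => if_neg (by omega)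
  simp only [coeff_add, coeff_X_pow, finsetSum_coeff, coeff_C_mul_X_pow, hsum]
  split_ifs <;> first | omega | simp

namespace TB

variable {n r : ℕ}

def varWeight (n r : ℕ) : Fin n ⊕ Fin r → ℕ := Sum.elim (fun i => n - i) (fun j => r - j)

theorem isWeightedHomogeneous_coeff_ser {σ A : Type*} [CommRing A] {w : σ → ℕ} {m : ℕ}
    {cf : ℕ → MvPolynomial σ A} (h : ∀ k, 1 ≤ k → k ≤ m → IsWeightedHomogeneous w (cf k) k)
    (k : ℕ) : IsWeightedHomogeneous w (PowerSeries.coeff k (ser m cf)) k := by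
  rw [ser, PowerSeries.coeff_mk]
  split_ifs with h₀ hk
  · exact h₀ ▸ isWeightedHomogeneous_one _ _
  · exact h k (by omega) hk
  · exact isWeightedHomogeneous_zero _ _ _

theorem isWeightedHomogeneous_coeff_Aser (k : ℕ) :
    IsWeightedHomogeneous (varWeight n r) (PowerSeries.coeff k (Aser n r)) k := by
  refine isWeightedHomogeneous_coeff_ser (fun k h₁ h₂ => ?_) k
  rw [dif_pos ⟨h₁, h₂⟩]
  have hw : varWeight n r (Sum.inl ⟨n - k, by omega⟩) = k := by
    simp only [varWeight, Sum.elim_inl]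
    omega
  have hX := isWeightedHomogeneous_X ℂ (varWeight n r) (Sum.inl (⟨n - k, by omega⟩ : Fin n))
  rwa [hw] at hX

theorem isWeightedHomogeneous_coeff_Bser (k : ℕ) :
    IsWeightedHomogeneous (varWeight n r) (PowerSeries.coeff k (Bser n r)) k := by
  refine isWeightedHomogeneous_coeff_ser (fun k h₁ h₂ => ?_) k
  rw [dif_pos ⟨h₁, h₂⟩]
  have hw : varWeight n r (Sum.inr ⟨r - k, by omega⟩) = k := by
    simp only [varWeight, Sum.elim_inr]
    omega
  have hX := isWeightedHomogeneous_X ℂ (varWeight n r) (Sum.inr (⟨r - k, by omega⟩ : Fin r))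
  rwa [hw] at hX

theorem isWeightedHomogeneous_d {d : Fin n → R n r} (hd : dSpec n r d) (i : Fin n) :
    IsWeightedHomogeneous (varWeight n r) (d i) (n - i) := by
  have h := PowerSeries.isWeightedHomogeneous_coeff_of_mul_eq (by simp [Bser, ser])
    isWeightedHomogeneous_coeff_Bser (fun k _ => isWeightedHomogeneous_coeff_Aser k) hd
    (n - i) (by omega)
  rwa [Dser, ser, PowerSeries.coeff_mk, if_neg (by omega), if_pos (by omega), dif_pos (by omega),
    show (⟨n - (n - i), _⟩ : Fin n) = i from Fin.ext (by dsimp only; omega)] at h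

theorem isWeightedHomogeneous_psi {d : Fin n → R n r} (hd : dSpec n r d) (hr : 0 < r)
    (hrn : r ≤ n) {m : ℕ} (hm : m ≤ n) :
    IsWeightedHomogeneous (varWeight n r) (psi n r hr hrn d m) (n - m) := by
  rw [psi]
  split_ifs with hmr
  · exact isWeightedHomogeneous_d hd _
  · obtain ⟨s, hs⟩ : ∃ s, m / r = s + 1 :=
      ⟨m / r - 1, by have := (Nat.one_le_div_iff hr).mpr (not_lt.mp hmr); omega⟩
    have hdiv := Nat.div_add_mod m r
    rw [hs, Nat.mul_succ] at hdiv
    have hmod := Nat.mod_lt m hr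
    refine IsWeightedHomogeneous.iterate_pderiv
      ((isWeightedHomogeneous_d hd ⟨r - 1, by omega⟩).pderiv ?_)
    simp only [varWeight, Sum.elim_inr, hs, Nat.add_sub_cancel, Nat.sub_zero, Nat.mul_comm s r]
    omega

theorem ev0_apply (φ : R n r) : ev0 n r φ = constantCoeff φ := by
  rw [ev0, eval_zero']

def grad0 (φ : R n r) : Fin n ⊕ Fin r → ℂ := fun v => ev0 n r (pderiv v φ)

theorem grad0_eq_zero_of_isWeightedHomogeneous {φ : R n r} {D : ℕ}
    (h : IsWeightedHomogeneous (varWeight n r) φ D) {v : Fin n ⊕ Fin r}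
    (hv : varWeight n r v < D) : grad0 φ v = 0 := by
  rw [grad0, ev0_apply]
  exact (h.pderiv (Nat.sub_add_cancel hv.le)).constantCoeff_eq_zero (by omega)

theorem coeff_fpoly (u : ℕ) : (fpoly n r).coeff u
    = if h : u < n then X (Sum.inl ⟨u, h⟩) else if u = n then 1 else 0 :=
  Polynomial.coeff_X_pow_add_sum_C_mul_X_pow _ u

theorem coeff_gpoly (u : ℕ) : (gpoly n r).coeff u
    = if h : u < r then X (Sum.inr ⟨u, h⟩) else if u = r then 1 else 0 :=
  Polynomial.coeff_X_pow_add_sum_C_mul_X_pow _ u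

theorem grad0_cc_inl (k : Fin (n + r)) (t : Fin n) :
    grad0 (cc n r k) (Sum.inl t) = if (k : ℕ) = t + r then 1 else 0 := by
  have hterm : ∀ i ∈ Finset.range (k + 1), ev0 n r (pderiv (Sum.inl t)
      ((fpoly n r).coeff i * (gpoly n r).coeff (k - i)))
        = if i = t then (if (k : ℕ) - i = r then 1 else 0) else 0 := by
    intro i _
    rw [Derivation.leibniz, coeff_fpoly, coeff_gpoly]
    split_ifs <;> simp_all [pderiv_X, ev0_apply, Fin.ext_iff] <;> omega
  rw [grad0, cc, Polynomial.coeff_mul, Finset.Nat.sum_antidiagonal_eq_sum_range_succ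
    (fun i j => (fpoly n r).coeff i * (gpoly n r).coeff j), map_sum, map_sum,
    Finset.sum_congr rfl hterm, Finset.sum_ite_eq']
  simp only [Finset.mem_range]
  split_ifs <;> first | rfl | omega

theorem grad0_cc_inr (k : Fin (n + r)) (j : Fin r) :
    grad0 (cc n r k) (Sum.inr j) = if (k : ℕ) = n + j then 1 else 0 := by
  have hterm : ∀ i ∈ Finset.range (k + 1), ev0 n r (pderiv (Sum.inr j)
      ((fpoly n r).coeff i * (gpoly n r).coeff (k - i)))
        = if i = n then (if (k : ℕ) - i = j then 1 else 0) else 0 := by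
    intro i _
    rw [Derivation.leibniz, coeff_fpoly, coeff_gpoly]
    split_ifs <;> simp_all [pderiv_X, ev0_apply, Fin.ext_iff] <;> omega
  rw [grad0, cc, Polynomial.coeff_mul, Finset.Nat.sum_antidiagonal_eq_sum_range_succ
    (fun i j => (fpoly n r).coeff i * (gpoly n r).coeff j), map_sum, map_sum,
    Finset.sum_congr rfl hterm, Finset.sum_ite_eq']
  simp only [Finset.mem_range]
  split_ifs <;> first | rfl | omega

def colVar (n r : ℕ) : Fin (n + r) ≃ Fin n ⊕ Fin r :=
  finSumFinEquiv.symm.trans (Equiv.sumCongr Fin.revPerm Fin.revPerm)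

theorem jac_map_ev0 {ι : Type*} (P : ι → R n r) :
    (jac P).map (ev0 n r)
      = (Matrix.of fun i => grad0 (P i)).submatrix (Equiv.refl ι) (colVar n r) := by
  ext i j
  induction j using Fin.addCases <;> simp [jac, grad0, colVar, Fin.rev, Nat.sub_sub, add_comm]

theorem rank_map_ev0_jac {ι : Type*} [Fintype ι] (P : ι → R n r) :
    ((jac P).map (ev0 n r)).rank
      = Module.finrank ℂ (Submodule.span ℂ (Set.range fun i => grad0 (P i))) := by
  rw [jac_map_ev0, rank_submatrix, rank_eq_finrank_span_row]
  rfl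

theorem rank_map_ev0_jac_cc_elim {ι : Type*} [Fintype ι] (hrn : r ≤ n) (ψ : ι → R n r)
    (hψ : ∀ i v, varWeight n r v ≤ r → grad0 (ψ i) v = 0) :
    ((jac (Sum.elim (cc n r) ψ)).map (ev0 n r)).rank = n := by
  classical
  set u : Fin n → Fin n ⊕ Fin r → ℂ := fun t => grad0 (cc n r ⟨t + r, by omega⟩)
  have hu_inl (t : Fin n) : u t ∘ Sum.inl = Pi.single t 1 := by
    funext s
    simp [u, grad0_cc_inl, Pi.single_apply, Fin.ext_iff, eq_comm]
  have hu_single (t : Fin n) (ht : (t : ℕ) + r < n) : u t = Pi.single (Sum.inl t) 1 := by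
    funext v
    rcases v with s | j
    · simp [u, grad0_cc_inl, Pi.single_apply, Fin.ext_iff, eq_comm]
    · rw [Pi.single_apply, if_neg Sum.inr_ne_inl]
      exact (grad0_cc_inr _ j).trans (if_neg (by simp only; omega))
  have hu : LinearIndependent ℂ u := by
    refine LinearIndependent.of_comp (LinearMap.funLeft ℂ ℂ Sum.inl) ?_
    convert (Pi.basisFun ℂ (Fin n)).linearIndependent using 1
    funext t
    rw [Pi.basisFun_apply]
    exact hu_inl t
  have hspan : Submodule.span ℂ (Set.range fun i => grad0 (Sum.elim (cc n r) ψ i))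
      = Submodule.span ℂ (Set.range u) := by
    refine le_antisymm (Submodule.span_le.mpr ?_) (Submodule.span_mono ?_)
    · rintro _ ⟨k | i, rfl⟩
      · show grad0 (cc n r k) ∈ _
        by_cases hk : (k : ℕ) < r
        · have hzero : grad0 (cc n r k) = 0 := by
            funext v
            rcases v with s | j
            · exact (grad0_cc_inl k s).trans (if_neg (by omega))
            · exact (grad0_cc_inr k j).trans (if_neg (by omega))
          rw [hzero]
          exact Submodule.zero_mem _
        · refine Submodule.subset_span ⟨⟨k - r, by omega⟩, ?_⟩
          simp only [u, Nat.sub_add_cancel (not_lt.mp hk)]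
      · refine Submodule.pi_mem_of_single_mem fun v hv => ?_
        rcases v with t | j
        · have ht : (t : ℕ) + r < n := by
            by_contra
            exact hv (hψ i _ (by simp only [varWeight, Sum.elim_inl]; omega))
          rw [← hu_single t ht]
          exact Submodule.subset_span ⟨t, rfl⟩
        · exact absurd (hψ i _ (by simp [varWeight])) hv
    · rintro _ ⟨t, rfl⟩
      exact ⟨Sum.inl _, rfl⟩
  rw [rank_map_ev0_jac, hspan, finrank_span_eq_card hu, Fintype.card_fin]

/-- Corollary 3.7: for `0 ≤ p ≤ q_1-1`, the Jacobian of
`(c, ψ_0,…,ψ_{pr-1})` at the origin has rank `n` (corank `r`). -/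
theorem stmt8 (n r q1 r1 : ℕ) (hq1 : 1 ≤ q1) (h2 : r1 < r)
    (hn : n = q1 * r + r1)
    (d : Fin n → R n r) (hd : dSpec n r d) :
    ∀ p, p ≤ q1 - 1 →
      ((jac (Sum.elim (cc n r)
          fun i : Fin (p * r) => psi n r (by omega) (rle q1 r r1 n (by omega) hn) d (i : ℕ))).map
        (ev0 n r)).rank = n := by
  intro p hp
  have hrn := rle q1 r r1 n hq1 hn
  have hpr : p * r + r ≤ n :=
    calc p * r + r = (p + 1) * r := by ring
      _ ≤ q1 * r := Nat.mul_le_mul_right r (by omega)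
      _ ≤ n := hn ▸ Nat.le_add_right _ _
  refine rank_map_ev0_jac_cc_elim hrn _ fun i v hv => ?_
  have hi := i.isLt
  exact grad0_eq_zero_of_isWeightedHomogeneous
    (isWeightedHomogeneous_psi hd _ hrn (m := i) (by omega)) (by omega)

end TB
end
end
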